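/- Let G be a strongly connected signed digraph. Then G is structurally balanced if and only if the matrix W·L has 0 as an eigenvalue of algebraic multiplicity exactly one (i.e., 0 is a simple root of the characteristic polynomial of W·L over ℂ) and every other complex eigenvalue of W·L has strictly positive real part. -/

import Mathlib

open Matrix BigOperators Filter

/-- In-degree of node `i`: sum of absolute values of the `i`-th row of `A`. -/
noncomputable def inDeg {n : ℕ} (A : Matrix (Fin n) (Fin n) ℝ) (i : Fin n) : ℝ := ∑ j, |A i j|

/-- Laplacian `L = Δ − A` of the signed digraph with adjacency matrix `A`. -/
noncomputable def lapOf {n : ℕ} (A : Matrix (Fin n) (Fin n) ℝ) : Matrix (Fin n) (Fin n) ℝ :=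
  Matrix.diagonal (inDeg A) - A

/-- Laplacian `L̄ = Δ − Ā` of the induced unsigned digraph. -/
noncomputable def lapBar {n : ℕ} (A : Matrix (Fin n) (Fin n) ℝ) : Matrix (Fin n) (Fin n) ℝ :=
  Matrix.diagonal (inDeg A) - Matrix.of (fun i j => |A i j|)

/-- `det(L̄_ii)`: determinant of `L̄` with its `i`-th row and column removed. -/
noncomputable def minorDet {n : ℕ} (A : Matrix (Fin n) (Fin n) ℝ) (i : Fin n) : ℝ :=
  Matrix.det ((lapBar A).submatrix (fun k : {j : Fin n // j ≠ i} => (k : Fin n))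
    (fun k : {j : Fin n // j ≠ i} => (k : Fin n)))

/-- `W = diag(det(L̄_11), …, det(L̄_nn))`. -/
noncomputable def Wmat {n : ℕ} (A : Matrix (Fin n) (Fin n) ℝ) : Matrix (Fin n) (Fin n) ℝ :=
  Matrix.diagonal (minorDet A)

/-- Mirror adjacency matrix `Â = (W·A + Aᵀ·W)/2`. -/
noncomputable def mirrorAdj {n : ℕ} (A : Matrix (Fin n) (Fin n) ℝ) : Matrix (Fin n) (Fin n) ℝ :=
  (1/2 : ℝ) • (Wmat A * A + Aᵀ * Wmat A)

/-- Mirror Laplacian `L̂ = (W·L + Lᵀ·W)/2`. -/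
noncomputable def mirrorLap {n : ℕ} (A : Matrix (Fin n) (Fin n) ℝ) : Matrix (Fin n) (Fin n) ℝ :=
  (1/2 : ℝ) • (Wmat A * lapOf A + (lapOf A)ᵀ * Wmat A)

/-- `(j, i)` is a directed edge when `a_ij ≠ 0`; strong connectivity: a directed
path between every ordered pair of distinct nodes. -/
def StronglyConnected {n : ℕ} (A : Matrix (Fin n) (Fin n) ℝ) : Prop :=
  ∀ i j : Fin n, i ≠ j → Relation.TransGen (fun u v => A v u ≠ 0) i j

/-- `σ` is the diagonal of a gauge transformation: each entry is `±1`. -/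
def IsGauge {n : ℕ} (σ : Fin n → ℝ) : Prop := ∀ i, σ i = 1 ∨ σ i = -1

/-- Structural balance: there is a gauge transformation `D = diag σ` with all entries
of `D·A·D` (entrywise `σ i * A i j * σ j`) nonnegative. -/
def StructBalanced {n : ℕ} (A : Matrix (Fin n) (Fin n) ℝ) : Prop :=
  ∃ σ : Fin n → ℝ, IsGauge σ ∧ ∀ i j, 0 ≤ σ i * A i j * σ j

/-- Improved Laplacian potential function
`Φ_e(x) = Σ_i Σ_j det(L̄_ii)·|a_ij|·(x_i − sgn(a_ij)·x_j)²`. -/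
noncomputable def PhiE {n : ℕ} (A : Matrix (Fin n) (Fin n) ℝ) (x : Fin n → ℝ) : ℝ :=
  ∑ i, ∑ j, minorDet A i * |A i j| * (x i - Real.sign (A i j) * x j) ^ 2

/-!
The weights `w_i = det L̄_ii` are positive, by a maximum principle for the grounded unsigned
Laplacian along strongly connected paths, and they form a left null vector of `L̄` (a row of
`adj L̄`). That left null vector turns the potential into `Φ_e(x) = 2 xᵀ W L x`, so the symmetric
part of `W L` is positive semidefinite, and `Φ_e(x) = 0` forces `x_i = sgn(a_ij) x_j` along every
edge, hence `L x = 0`. Therefore every nonzero eigenvalue of `W L` has positive real part, balanced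
or not. A nonzero kernel vector `x` of `W L` has constant `|x|`, and `x / |x|` is a balancing
gauge. Conversely a balancing gauge `D` conjugates `W L` to `W L̄`, whose kernel is spanned by `𝟙`
while its left null vector `𝟙ᵀ W` is not orthogonal to `𝟙`: there is no Jordan chain at `0`.
-/

namespace Real

lemma abs_mul_sign (r : ℝ) : |r| * sign r = r := by
  rcases lt_trichotomy r 0 with h | rfl | h
  · rw [sign_of_neg h, abs_of_neg h]; ring
  · simp
  · rw [sign_of_pos h, abs_of_pos h]; ring

lemma abs_mul_sign_sq (r : ℝ) : |r| * sign r ^ 2 = |r| := by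
  rcases lt_trichotomy r 0 with h | rfl | h
  · rw [sign_of_neg h]; ring
  · simp
  · rw [sign_of_pos h]; ring

end Real

lemma Polynomial.Monic.eval_zero_pos {p : Polynomial ℝ} (hp : p.Monic)
    (h : ∀ t, 0 ≤ t → p.eval t ≠ 0) : 0 < p.eval 0 := by
  by_contra! h0
  rcases Nat.eq_zero_or_pos p.natDegree with hdeg | hdeg
  · rw [hp.natDegree_eq_zero.mp hdeg] at h0
    norm_num at h0
  have htend := p.tendsto_atTop_of_leadingCoeff_nonneg
    (Polynomial.natDegree_pos_iff_degree_pos.mp hdeg) (by rw [hp.leadingCoeff]; norm_num)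
  obtain ⟨T, hT, hT0⟩ := ((htend.eventually_ge_atTop 0).and (eventually_ge_atTop 0)).exists
  obtain ⟨c, hc, hc0⟩ := intermediate_value_Icc hT0 p.continuous.continuousOn ⟨h0, hT⟩
  exact h c hc.1 hc0

theorem Matrix.adjugate_apply_self {R m : Type*} [CommRing R] [Fintype m] [DecidableEq m]
    (M : Matrix m m R) (i : m) :
    adjugate M i i = (M.submatrix (Subtype.val : {j // j ≠ i} → m) Subtype.val).det := by
  rw [adjugate_apply, twoBlockTriangular_det' _ (· = i)]
  · refine (congrArg₂ (· * ·) ?_ ?_).trans (one_mul _)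
    · convert det_unique _
      · simp [toSquareBlockProp, toBlock_apply, (default : {a // a = i}).2]
      · exact Unique.subtypeEq i
    · congr 1
      ext a b
      simp [toSquareBlockProp, toBlock_apply, updateRow_ne a.2]
  · rintro a rfl b hb
    simp [Pi.single_eq_of_ne hb]

theorem Matrix.rootMultiplicity_zero_charpoly_eq_one {K m : Type*} [Field K] [Fintype m]
    [DecidableEq m] {M : Matrix m m K} {v w : m → K} (hv : v ≠ 0)
    (hker : LinearMap.ker M.toLin' = K ∙ v) (hw : w ᵥ* M = 0) (hwv : w ⬝ᵥ v ≠ 0) :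
    M.charpoly.rootMultiplicity 0 = 1 := by
  set f := M.toLin'
  -- `w` kills the range of `f` but not `v`, so `f x ∈ K ∙ v` forces `f x = 0`
  have hsemisimple : ∀ k x, (f ^ k) x = 0 → f x = 0 := by
    intro k
    induction k with
    | zero => intro x hx; rw [pow_zero, Module.End.one_apply] at hx; rw [hx, map_zero]
    | succ k ih =>
      intro x hx
      rw [pow_succ, Module.End.mul_apply] at hx
      obtain ⟨c, hc⟩ := Submodule.mem_span_singleton.mp (hker ▸ ih _ hx : f x ∈ K ∙ v)
      have hc0 : c * (w ⬝ᵥ v) = 0 := by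
        rw [← smul_eq_mul, ← dotProduct_smul, hc, toLin'_apply, dotProduct_mulVec, hw,
          zero_dotProduct]
      rw [← hc, (mul_eq_zero.mp hc0).resolve_right hwv, zero_smul]
  have hmax : Module.End.maxGenEigenspace f 0 = K ∙ v := by
    rw [← hker, ← Module.End.eigenspace_zero]
    refine le_antisymm (fun x hx => ?_) Module.End.eigenspace_le_maxGenEigenspace
    obtain ⟨k, hk⟩ := (Module.End.mem_maxGenEigenspace f 0 x).mp hx
    rw [zero_smul, sub_zero] at hk
    rw [Module.End.eigenspace_zero]
    exact hsemisimple k x hk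
  rw [← charpoly_toLin', ← LinearMap.finrank_maxGenEigenspace_eq, hmax, finrank_span_singleton hv]

theorem Matrix.re_pos_of_isRoot_charpoly_map {m : Type*} [Fintype m] [DecidableEq m]
    {M : Matrix m m ℝ} (hnonneg : ∀ x, 0 ≤ x ⬝ᵥ M *ᵥ x)
    (hker : ∀ x, x ⬝ᵥ M *ᵥ x = 0 → M *ᵥ x = 0) {μ : ℂ} (hμ : μ ≠ 0)
    (hroot : (M.map Complex.ofReal).charpoly.IsRoot μ) : 0 < μ.re := by
  have hμM : Module.End.HasEigenvalue (M.map Complex.ofReal).toLin' μ :=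
    (Module.End.hasEigenvalue_iff_isRoot_charpoly _ μ).mpr (by rwa [charpoly_toLin'])
  obtain ⟨z, hz⟩ := hμM.exists_hasEigenvector
  have hMz : M.map Complex.ofReal *ᵥ z = μ • z := by simpa using hz.apply_eq_smul
  set u : m → ℝ := fun i => (z i).re
  set v : m → ℝ := fun i => (z i).im
  have hu : M *ᵥ u = μ.re • u - μ.im • v := funext fun i => by
    simpa [mulVec, dotProduct, Complex.re_sum] using congrArg Complex.re (congrFun hMz i)
  have hv : M *ᵥ v = μ.re • v + μ.im • u := funext fun i => by
    simpa [mulVec, dotProduct, Complex.im_sum, add_comm] using congrArg Complex.im (congrFun hMz i)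
  have hquad : u ⬝ᵥ M *ᵥ u + v ⬝ᵥ M *ᵥ v = μ.re * (u ⬝ᵥ u + v ⬝ᵥ v) := by
    rw [hu, hv, dotProduct_sub, dotProduct_add, dotProduct_smul, dotProduct_smul,
      dotProduct_smul, dotProduct_smul, dotProduct_comm v u]
    simp only [smul_eq_mul]
    ring
  have hself : ∀ y : m → ℝ, 0 ≤ y ⬝ᵥ y := fun y => Finset.sum_nonneg fun i _ => mul_self_nonneg _
  have hnorm : 0 < u ⬝ᵥ u + v ⬝ᵥ v := by
    refine lt_of_le_of_ne (add_nonneg (hself u) (hself v)) fun h => hz.2 (funext fun i => ?_)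
    rw [eq_comm, add_eq_zero_iff_of_nonneg (hself u) (hself v), dotProduct_self_eq_zero,
      dotProduct_self_eq_zero] at h
    exact Complex.ext (congrFun h.1 i) (congrFun h.2 i)
  have hre : 0 ≤ μ.re :=
    (mul_nonneg_iff_of_pos_right hnorm).mp (hquad ▸ add_nonneg (hnonneg u) (hnonneg v))
  refine lt_of_le_of_ne hre fun hre0 => ?_
  rw [← hre0, zero_mul] at hquad
  have him : μ.im ≠ 0 := fun h => hμ (Complex.ext hre0.symm h)
  have hv0 : v = 0 := by
    have := hker u (by linarith [hnonneg u, hnonneg v])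
    rwa [hu, ← hre0, zero_smul, zero_sub, neg_eq_zero, smul_eq_zero, or_iff_right him] at this
  have hu0 : u = 0 := by
    have := hker v (by linarith [hnonneg u, hnonneg v])
    rwa [hv, ← hre0, zero_smul, zero_add, smul_eq_zero, or_iff_right him] at this
  simp [hu0, hv0] at hnorm

theorem Matrix.rootMultiplicity_charpoly_map_ofReal {m : Type*} [Fintype m] [DecidableEq m]
    (M : Matrix m m ℝ) (μ : ℝ) :
    (M.map Complex.ofReal).charpoly.rootMultiplicity (μ : ℂ) = M.charpoly.rootMultiplicity μ := by
  rw [show M.map Complex.ofReal = M.map Complex.ofRealHom from rfl, charpoly_map,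
    ← Complex.ofRealHom_eq_coe, ← Polynomial.eq_rootMultiplicity_map Complex.ofRealHom.injective]

section SignedDigraph

variable {n : ℕ} {A : Matrix (Fin n) (Fin n) ℝ}

lemma lapOf_mulVec_apply (x : Fin n → ℝ) (i : Fin n) :
    (lapOf A *ᵥ x) i = ∑ j, (|A i j| * x i - A i j * x j) := by
  rw [lapOf, sub_mulVec, Pi.sub_apply, mulVec_diagonal, inDeg, Finset.sum_mul, mulVec,
    dotProduct, ← Finset.sum_sub_distrib]

lemma lapBar_mulVec_apply (x : Fin n → ℝ) (i : Fin n) :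
    (lapBar A *ᵥ x) i = ∑ j, |A i j| * (x i - x j) := by
  rw [lapBar, sub_mulVec, Pi.sub_apply, mulVec_diagonal, inDeg, Finset.sum_mul, mulVec,
    dotProduct, ← Finset.sum_sub_distrib]
  simp only [of_apply, mul_sub]

lemma Wmat_mul_lapOf_mulVec (x : Fin n → ℝ) :
    (Wmat A * lapOf A) *ᵥ x = fun i => minorDet A i * (lapOf A *ᵥ x) i := by
  funext i
  rw [← mulVec_mulVec, Wmat, mulVec_diagonal]

lemma StronglyConnected.forall_of_closed (hsc : StronglyConnected A) {S : Fin n → Prop}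
    (hS : ∀ i j, A i j ≠ 0 → S i → S j) {i : Fin n} (hi : S i) (j : Fin n) : S j := by
  rcases eq_or_ne j i with rfl | hji
  · exact hi
  · have path := Relation.transGen_swap.mp (hsc j i hji)
    clear hji
    induction path with
    | single h => exact hS _ _ h hi
    | tail _ h ih => exact hS _ _ h ih

lemma StronglyConnected.eq_of_forall_edge (hsc : StronglyConnected A) {g : Fin n → ℝ}
    (hg : ∀ i j, A i j ≠ 0 → g i = g j) (i j : Fin n) : g i = g j :=
  (hsc.forall_of_closed (S := fun k => g i = g k) (fun _ _ h hk => hk.trans (hg _ _ h)) rfl j)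

lemma eq_of_lapBar_of_isMax {x : Fin n → ℝ} {t : ℝ} {k j : Fin n} (hmax : ∀ l, x l ≤ x k)
    (ht : 0 ≤ t * x k) (hk : t * x k + (lapBar A *ᵥ x) k = 0) (hA : A k j ≠ 0) : x j = x k := by
  rw [lapBar_mulVec_apply] at hk
  have hterm : ∀ l ∈ Finset.univ, 0 ≤ |A k l| * (x k - x l) :=
    fun l _ => mul_nonneg (abs_nonneg _) (sub_nonneg.mpr (hmax l))
  have hsum : ∑ l, |A k l| * (x k - x l) = 0 :=
    le_antisymm (by linarith) (Finset.sum_nonneg hterm)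
  have := (Finset.sum_eq_zero_iff_of_nonneg hterm).mp hsum j (Finset.mem_univ _)
  rcases mul_eq_zero.mp this with h | h
  · exact absurd (abs_eq_zero.mp h) hA
  · linarith

lemma nonpos_of_lapBar_grounded (hsc : StronglyConnected A) {x : Fin n → ℝ} {t : ℝ} {i : Fin n}
    (ht : 0 ≤ t) (hxi : x i = 0) (hrow : ∀ k, k ≠ i → t * x k + (lapBar A *ᵥ x) k = 0)
    (k : Fin n) : x k ≤ 0 := by
  have : Nonempty (Fin n) := ⟨i⟩
  obtain ⟨k₀, hk₀⟩ := Finite.exists_max x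
  by_contra! hk
  have hpos : 0 < x k₀ := hk.trans_le (hk₀ k)
  have hclosed : ∀ l j, A l j ≠ 0 → x l = x k₀ → x j = x k₀ := by
    intro l j hA hl
    have hli : l ≠ i := by rintro rfl; linarith
    rw [← hl] at hk₀ hpos ⊢
    exact eq_of_lapBar_of_isMax hk₀ (mul_nonneg ht hpos.le) (hrow l hli) hA
  have := hsc.forall_of_closed hclosed rfl i
  linarith

lemma eq_zero_of_lapBar_grounded (hsc : StronglyConnected A) {x : Fin n → ℝ} {t : ℝ} {i : Fin n}
    (ht : 0 ≤ t) (hxi : x i = 0) (hrow : ∀ k, k ≠ i → t * x k + (lapBar A *ᵥ x) k = 0) :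
    x = 0 := by
  have hneg : ∀ k, 0 ≤ x k := by
    intro k
    refine neg_nonpos.mp (nonpos_of_lapBar_grounded hsc (x := -x) (i := i) ht (by simp [hxi]) ?_ k)
    intro l hl
    simp only [mulVec_neg, Pi.neg_apply, mul_neg, ← neg_add, hrow l hl, neg_zero]
  exact funext fun k => le_antisymm (nonpos_of_lapBar_grounded hsc ht hxi hrow k) (hneg k)

lemma eq_of_lapBar_mulVec_eq_zero (hsc : StronglyConnected A) {x : Fin n → ℝ}
    (hx : lapBar A *ᵥ x = 0) (k l : Fin n) : x k = x l := by
  have h := eq_zero_of_lapBar_grounded hsc (x := fun j => x j - x l) le_rfl (sub_self _)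
    fun j _ => by simpa [lapBar_mulVec_apply] using congrFun hx j
  exact sub_eq_zero.mp (congrFun h k)

noncomputable def groundedLap (A : Matrix (Fin n) (Fin n) ℝ) (i : Fin n) :
    Matrix {j // j ≠ i} {j // j ≠ i} ℝ :=
  (lapBar A).submatrix Subtype.val Subtype.val

lemma det_scalar_add_groundedLap_ne_zero (hsc : StronglyConnected A) (i : Fin n) {t : ℝ}
    (ht : 0 ≤ t) : (scalar _ t + groundedLap A i).det ≠ 0 := by
  intro hdet
  obtain ⟨y, hy0, hy⟩ := exists_mulVec_eq_zero_iff.mpr hdet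
  set x : Fin n → ℝ := fun k => if h : k = i then 0 else y ⟨k, h⟩
  have hxi : x i = 0 := dif_pos rfl
  have hxq : ∀ q : {j // j ≠ i}, x q = y q := fun q => dif_neg q.2
  have hrow : ∀ k (hk : k ≠ i),
      t * x k + (lapBar A *ᵥ x) k = ((scalar _ t + groundedLap A i) *ᵥ y) ⟨k, hk⟩ := by
    intro k hk
    rw [add_mulVec, Pi.add_apply, scalar_apply, mulVec_diagonal, mulVec, dotProduct,
      Fintype.sum_eq_add_sum_subtype_ne _ i, hxi, mul_zero, zero_add, ← hxq ⟨k, hk⟩]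
    simp only [hxq]
    rfl
  have := eq_zero_of_lapBar_grounded hsc ht hxi fun k hk => by rw [hrow k hk, hy]; rfl
  exact hy0 (funext fun q => by rw [← hxq q, this]; rfl)

lemma minorDet_eq_det_groundedLap (i : Fin n) : minorDet A i = (groundedLap A i).det := rfl

lemma minorDet_pos (hsc : StronglyConnected A) (i : Fin n) : 0 < minorDet A i := by
  have := (charpoly_monic (-groundedLap A i)).eval_zero_pos fun t ht => by
    rw [eval_charpoly, sub_neg_eq_add]
    exact det_scalar_add_groundedLap_ne_zero hsc i ht
  simpa [eval_charpoly, minorDet_eq_det_groundedLap] using this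

lemma sum_minorDet_mul_lapBar (hsc : StronglyConnected A) (j : Fin n) :
    ∑ k, minorDet A k * lapBar A k j = 0 := by
  have hdet : (lapBar A).det = 0 := exists_mulVec_eq_zero_iff.mp
    ⟨fun _ => 1, fun h => one_ne_zero (congrFun h j), funext fun k => by simp [lapBar_mulVec_apply]⟩
  have hcol : ∀ k c, adjugate (lapBar A) k c = minorDet A c := fun k c => by
    rw [eq_of_lapBar_mulVec_eq_zero hsc (x := fun k => adjugate (lapBar A) k c) ?_ k c]
    · exact adjugate_apply_self _ c
    · funext i
      have h := congrFun (congrFun (mul_adjugate (lapBar A)) i) c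
      rwa [hdet, zero_smul] at h
  simpa [hdet, mul_apply, hcol] using congrFun (congrFun (adjugate_mul (lapBar A)) j) j

lemma sum_minorDet_mul_abs (hsc : StronglyConnected A) (j : Fin n) :
    ∑ k, minorDet A k * |A k j| = minorDet A j * inDeg A j := by
  have h := sum_minorDet_mul_lapBar hsc j
  simp only [lapBar, Matrix.sub_apply, diagonal_apply, of_apply, mul_sub, mul_ite, mul_zero,
    Finset.sum_sub_distrib, Finset.sum_ite_eq', Finset.mem_univ, if_true] at h
  linarith

lemma PhiE_eq_two_mul_dotProduct (hsc : StronglyConnected A) (x : Fin n → ℝ) :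
    PhiE A x = 2 * (x ⬝ᵥ (Wmat A * lapOf A) *ᵥ x) := by
  have hterm : ∀ i j, minorDet A i * |A i j| * (x i - Real.sign (A i j) * x j) ^ 2
      = 2 * (x i * (minorDet A i * (|A i j| * x i - A i j * x j)))
        + (minorDet A i * |A i j| * x j ^ 2 - minorDet A i * |A i j| * x i ^ 2) := by
    intro i j
    linear_combination (-2 * minorDet A i * x i * x j) * Real.abs_mul_sign (A i j)
      + (minorDet A i * x j ^ 2) * Real.abs_mul_sign_sq (A i j)
  have hflow : ∑ i, ∑ j, minorDet A i * |A i j| * x j ^ 2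
      = ∑ i, ∑ j, minorDet A i * |A i j| * x i ^ 2 := by
    rw [Finset.sum_comm]
    refine Finset.sum_congr rfl fun j _ => ?_
    rw [← Finset.sum_mul, sum_minorDet_mul_abs hsc, inDeg, Finset.mul_sum, Finset.sum_mul]
  have hdot : x ⬝ᵥ (Wmat A * lapOf A) *ᵥ x
      = ∑ i, ∑ j, x i * (minorDet A i * (|A i j| * x i - A i j * x j)) := by
    simp only [dotProduct, Wmat_mul_lapOf_mulVec, lapOf_mulVec_apply, Finset.mul_sum]
  simp only [PhiE, hterm, Finset.sum_add_distrib, Finset.sum_sub_distrib, ← Finset.mul_sum,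
    hflow, sub_self, add_zero, hdot]

lemma PhiE_term_nonneg (hsc : StronglyConnected A) (x : Fin n → ℝ) (i j : Fin n) :
    0 ≤ minorDet A i * |A i j| * (x i - Real.sign (A i j) * x j) ^ 2 :=
  mul_nonneg (mul_nonneg (minorDet_pos hsc i).le (abs_nonneg _)) (sq_nonneg _)

lemma PhiE_nonneg (hsc : StronglyConnected A) (x : Fin n → ℝ) : 0 ≤ PhiE A x :=
  Finset.sum_nonneg fun i _ => Finset.sum_nonneg fun j _ => PhiE_term_nonneg hsc x i j

lemma eq_sign_mul_of_PhiE_eq_zero (hsc : StronglyConnected A) {x : Fin n → ℝ}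
    (hx : PhiE A x = 0) {i j : Fin n} (hA : A i j ≠ 0) : x i = Real.sign (A i j) * x j := by
  have hrow := (Finset.sum_eq_zero_iff_of_nonneg fun i _ => Finset.sum_nonneg fun j _ =>
    PhiE_term_nonneg hsc x i j).mp hx i (Finset.mem_univ _)
  have hij := (Finset.sum_eq_zero_iff_of_nonneg fun j _ => PhiE_term_nonneg hsc x i j).mp hrow j
    (Finset.mem_univ _)
  have hw : minorDet A i * |A i j| ≠ 0 := mul_ne_zero (minorDet_pos hsc i).ne' (abs_ne_zero.mpr hA)
  exact sub_eq_zero.mp (pow_eq_zero_iff two_ne_zero |>.mp ((mul_eq_zero.mp hij).resolve_left hw))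

lemma lapOf_mulVec_eq_zero {x : Fin n → ℝ}
    (hx : ∀ i j, A i j ≠ 0 → x i = Real.sign (A i j) * x j) : lapOf A *ᵥ x = 0 := by
  funext i
  rw [lapOf_mulVec_apply, Pi.zero_apply]
  refine Finset.sum_eq_zero fun j _ => ?_
  by_cases hA : A i j = 0
  · simp [hA]
  · rw [hx i j hA, ← mul_assoc, Real.abs_mul_sign, sub_self]

lemma dotProduct_Wmat_mul_lapOf_nonneg (hsc : StronglyConnected A) (x : Fin n → ℝ) :
    0 ≤ x ⬝ᵥ (Wmat A * lapOf A) *ᵥ x := by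
  have := PhiE_nonneg hsc x
  rw [PhiE_eq_two_mul_dotProduct hsc] at this
  linarith

lemma Wmat_mul_lapOf_mulVec_eq_zero (hsc : StronglyConnected A) {x : Fin n → ℝ}
    (hx : x ⬝ᵥ (Wmat A * lapOf A) *ᵥ x = 0) : (Wmat A * lapOf A) *ᵥ x = 0 := by
  have hPhi : PhiE A x = 0 := by rw [PhiE_eq_two_mul_dotProduct hsc, hx, mul_zero]
  have hLx : lapOf A *ᵥ x = 0 :=
    lapOf_mulVec_eq_zero fun _ _ => eq_sign_mul_of_PhiE_eq_zero hsc hPhi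
  rw [← mulVec_mulVec, hLx, mulVec_zero]

lemma structBalanced_of_eq_sign_mul (hsc : StronglyConnected A) {x : Fin n → ℝ} (hx : x ≠ 0)
    (hedge : ∀ i j, A i j ≠ 0 → x i = Real.sign (A i j) * x j) : StructBalanced A := by
  have habs : ∀ k l, |x k| = |x l| := hsc.eq_of_forall_edge fun i j hA => by
    rcases Real.sign_apply_eq_of_ne_zero _ hA with h | h <;> simp [hedge i j hA, h]
  obtain ⟨k₀, hk₀⟩ := Function.ne_iff.mp hx
  have hc : 0 < |x k₀| := abs_pos.mpr hk₀
  refine ⟨fun k => x k / |x k₀|, fun k => ?_, fun i j => ?_⟩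
  · rcases (abs_eq hc.le).mp (habs k k₀) with h | h <;> simp [h, hc.ne']
  · by_cases hA : A i j = 0
    · simp [hA]
    · have : x i / |x k₀| * A i j * (x j / |x k₀|)
          = Real.sign (A i j) * A i j * (x j / |x k₀|) ^ 2 := by
        rw [hedge i j hA]; ring
      rw [this]
      exact mul_nonneg (Real.sign_mul_nonneg _) (sq_nonneg _)

lemma structBalanced_of_det_eq_zero (hsc : StronglyConnected A)
    (hdet : (Wmat A * lapOf A).det = 0) : StructBalanced A := by
  obtain ⟨x, hx0, hx⟩ := exists_mulVec_eq_zero_iff.mpr hdet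
  have hPhi : PhiE A x = 0 := by
    rw [PhiE_eq_two_mul_dotProduct hsc, hx, dotProduct_zero, mul_zero]
  exact structBalanced_of_eq_sign_mul hsc hx0 fun _ _ => eq_sign_mul_of_PhiE_eq_zero hsc hPhi

lemma IsGauge.eq_mul_mul_abs {σ : Fin n → ℝ} (hσ : IsGauge σ) {i j : Fin n} {a : ℝ}
    (h : 0 ≤ σ i * a * σ j) : a = σ i * σ j * |a| := by
  rcases hσ i with hi | hi <;> rcases hσ j with hj | hj <;> rw [hi, hj] at h ⊢ <;>
    cases abs_cases a <;> linarith

lemma IsGauge.mul_self {σ : Fin n → ℝ} (hσ : IsGauge σ) (i : Fin n) : σ i * σ i = 1 := by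
  rcases hσ i with h | h <;> rw [h] <;> norm_num

lemma lapOf_eq_diagonal_mul_lapBar_mul_diagonal {σ : Fin n → ℝ} (hσ : IsGauge σ)
    (hbal : ∀ i j, 0 ≤ σ i * A i j * σ j) :
    lapOf A = diagonal σ * lapBar A * diagonal σ := by
  ext i j
  rw [mul_diagonal, diagonal_mul, lapOf, lapBar, Matrix.sub_apply, Matrix.sub_apply,
    diagonal_apply, of_apply]
  conv_lhs => rw [hσ.eq_mul_mul_abs (hbal i j)]
  split_ifs with hij
  · subst hij
    linear_combination (-inDeg A i) * hσ.mul_self i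
  · ring

lemma charpoly_Wmat_mul_lapOf (hbal : StructBalanced A) :
    (Wmat A * lapOf A).charpoly = (Wmat A * lapBar A).charpoly := by
  obtain ⟨σ, hσ, h⟩ := hbal
  have hinv : diagonal σ * diagonal σ = 1 := by
    rw [diagonal_mul_diagonal, ← diagonal_one]
    exact congrArg diagonal (funext hσ.mul_self)
  have hcomm : Wmat A * diagonal σ = diagonal σ * Wmat A := by
    simp only [Wmat, diagonal_mul_diagonal, mul_comm]
  rw [lapOf_eq_diagonal_mul_lapBar_mul_diagonal hσ h, ← mul_assoc, ← mul_assoc, hcomm, mul_assoc,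
    mul_assoc, charpoly_mul_comm, mul_assoc, mul_assoc, hinv, mul_one]

lemma rootMultiplicity_charpoly_Wmat_mul_lapBar [NeZero n] (hsc : StronglyConnected A) :
    (Wmat A * lapBar A).charpoly.rootMultiplicity 0 = 1 := by
  have hL1 : lapBar A *ᵥ 1 = 0 := funext fun i => by simp [lapBar_mulVec_apply]
  refine rootMultiplicity_zero_charpoly_eq_one (v := 1) (w := 1) one_ne_zero ?_ ?_ ?_
  · ext x
    rw [LinearMap.mem_ker, toLin'_apply, Submodule.mem_span_singleton]
    constructor
    · intro hx
      have hLx : lapBar A *ᵥ x = 0 := funext fun i => by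
        have := congrFun hx i
        rw [← mulVec_mulVec, Wmat, mulVec_diagonal] at this
        exact (mul_eq_zero.mp this).resolve_left (minorDet_pos hsc i).ne'
      exact ⟨x 0, funext fun i => by simp [eq_of_lapBar_mulVec_eq_zero hsc hLx i 0]⟩
    · rintro ⟨c, rfl⟩
      rw [mulVec_smul, ← mulVec_mulVec, hL1, mulVec_zero, smul_zero]
  · have hW : (1 : Fin n → ℝ) ᵥ* Wmat A = minorDet A := funext fun i => by
      simp [Wmat, vecMul_diagonal]
    rw [← vecMul_vecMul, hW]
    exact funext (sum_minorDet_mul_lapBar hsc)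
  · simp [NeZero.ne n]

end SignedDigraph

theorem balanced_iff_WL_spectrum_general (n : ℕ) (hn : 2 ≤ n)
    (A : Matrix (Fin n) (Fin n) ℝ)
    (hsc : StronglyConnected A) :
    StructBalanced A ↔
      (Polynomial.rootMultiplicity 0 (((Wmat A * lapOf A).map Complex.ofReal).charpoly) = 1 ∧
        ∀ μ : ℂ, μ ≠ 0 →
          (((Wmat A * lapOf A).map Complex.ofReal).charpoly).IsRoot μ → 0 < μ.re) := by
  have : NeZero n := ⟨by omega⟩
  have hmult : ((Wmat A * lapOf A).map Complex.ofReal).charpoly.rootMultiplicity 0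
      = (Wmat A * lapOf A).charpoly.rootMultiplicity 0 := by
    exact_mod_cast rootMultiplicity_charpoly_map_ofReal (Wmat A * lapOf A) 0
  rw [hmult]
  constructor
  · intro hbal
    refine ⟨?_, fun μ hμ => re_pos_of_isRoot_charpoly_map (dotProduct_Wmat_mul_lapOf_nonneg hsc)
      (fun _ => Wmat_mul_lapOf_mulVec_eq_zero hsc) hμ⟩
    rw [charpoly_Wmat_mul_lapOf hbal]
    exact rootMultiplicity_charpoly_Wmat_mul_lapBar hsc
  · rintro ⟨hsimple, -⟩
    refine structBalanced_of_det_eq_zero hsc ?_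
    rw [det_eq_sign_charpoly_coeff, Polynomial.coeff_zero_eq_eval_zero,
      (Polynomial.rootMultiplicity_pos (charpoly_monic _).ne_zero).mp (by omega), mul_zero]

/-- `G` is structurally balanced iff `W·L` has `0` as a simple eigenvalue
and every other complex eigenvalue has strictly positive real part. -/
theorem balanced_iff_WL_spectrum (n : ℕ) (hn : 2 ≤ n)
    (A : Matrix (Fin n) (Fin n) ℝ)
    (hdiag : ∀ i, A i i = 0) (hdigon : ∀ i j, 0 ≤ A i j * A j i)
    (hsc : StronglyConnected A) :
    StructBalanced A ↔
      (Polynomial.rootMultiplicity 0 (((Wmat A * lapOf A).map Complex.ofReal).charpoly) = 1 ∧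
        ∀ μ : ℂ, μ ≠ 0 →
          (((Wmat A * lapOf A).map Complex.ofReal).charpoly).IsRoot μ → 0 < μ.re) :=
  balanced_iff_WL_spectrum_general n hn A hsc
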